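/- arXiv:2107.03161 — 3 statements merged into one kernel-verified Lean document; each statement's English description precedes it below -/
import Mathlib

section
/- The monoid of magic labellings of the complete graph K4 is free with three generators: every magic labelling (x1,...,x6) ∈ ℕ^6 of K4 can be written uniquely as k1·α1 + k2·α2 + k3·α3 with k1,k2,k3 ∈ ℕ, where α1 = e2+e4, α2 = e1+e3, α3 = e5+e6. Conversely, every such nonnegative combination is a magic labelling of K4. -/
/-- A magic labelling of K4: edges a1,a2,a3,a4 form a 4-cycle, a5,a6 are diagonals. -/
def MagicK4 (x : Fin 6 → ℕ) : Prop :=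
  ∃ s : ℕ, x 0 + x 3 + x 4 = s ∧ x 0 + x 1 + x 5 = s ∧
    x 1 + x 2 + x 4 = s ∧ x 2 + x 3 + x 5 = s

def alpha1 : Fin 6 → ℕ := ![0, 1, 0, 1, 0, 0]
def alpha2 : Fin 6 → ℕ := ![1, 0, 1, 0, 0, 0]
def alpha3 : Fin 6 → ℕ := ![0, 0, 0, 0, 1, 1]

/-! Each αᵢ is the indicator of a pair of opposite edges of K4, and a labelling is magic exactly
when opposite edges carry equal labels: comparing the sums at the two ends of an edge gives
`x₁ + x₄ = x₂ + x₃` and `x₁ + x₂ = x₃ + x₄`, hence `x₁ = x₃`, `x₂ = x₄` and then `x₅ = x₆`.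
So the magic labellings are the `ℕ`-combinations of α₁, α₂, α₃, with coefficients read off
from the labels of a₂, a₁, a₅. -/

theorem smul_alpha_add_eq (k1 k2 k3 : ℕ) :
    k1 • alpha1 + k2 • alpha2 + k3 • alpha3 = ![k2, k1, k2, k1, k3, k3] := by
  ext i
  fin_cases i <;> simp [alpha1, alpha2, alpha3]

theorem magicK4_iff {x : Fin 6 → ℕ} : MagicK4 x ↔ x 2 = x 0 ∧ x 3 = x 1 ∧ x 5 = x 4 := by
  constructor
  · rintro ⟨s, h0, h1, h2, h3⟩
    omega
  · rintro ⟨h2, h3, h5⟩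
    exact ⟨_, rfl, by omega, by omega, by omega⟩

theorem MagicK4.eq_smul_alpha_add {x : Fin 6 → ℕ} (hx : MagicK4 x) :
    x = x 1 • alpha1 + x 0 • alpha2 + x 4 • alpha3 := by
  obtain ⟨h2, h3, h5⟩ := magicK4_iff.mp hx
  rw [smul_alpha_add_eq]
  ext i
  fin_cases i <;> simp [h2, h3, h5]

theorem smul_alpha_add_injective :
    Function.Injective fun k : ℕ × ℕ × ℕ => k.1 • alpha1 + k.2.1 • alpha2 + k.2.2 • alpha3 := by
  rintro ⟨a, b, c⟩ ⟨a', b', c'⟩ h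
  simp only [smul_alpha_add_eq] at h
  have ha := congrFun h 1
  have hb := congrFun h 0
  have hc := congrFun h 4
  simp_all

theorem magicK4_smul_alpha_add (k1 k2 k3 : ℕ) :
    MagicK4 (k1 • alpha1 + k2 • alpha2 + k3 • alpha3) := by
  rw [magicK4_iff, smul_alpha_add_eq]
  simp

theorem stmt_0 :
    (∀ x : Fin 6 → ℕ, MagicK4 x →
      ∃! k : ℕ × ℕ × ℕ, x = k.1 • alpha1 + k.2.1 • alpha2 + k.2.2 • alpha3) ∧
    (∀ k1 k2 k3 : ℕ, MagicK4 (k1 • alpha1 + k2 • alpha2 + k3 • alpha3)) :=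
  ⟨fun x hx => ⟨(x 1, x 0, x 4), hx.eq_smul_alpha_add,
      fun _ hk => smul_alpha_add_injective (hk.symm.trans hx.eq_smul_alpha_add)⟩,
    magicK4_smul_alpha_add⟩
end

section
/- For every s ∈ ℕ, the number of magic labellings of the complete graph K4 with magic sum s equals (s+1)(s+2)/2 = C(s+2,2). -/
/-!
Subtracting the equations pairwise shows that opposite edges of `K₄` carry equal labels, so a
magic labelling is the same as a choice of one label for each of the three perfect matchings
`{a₁, a₃}`, `{a₂, a₄}`, `{a₅, a₆}` with total `s`. By stars and bars there are `C(s + 2, 2)`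
such choices.
-/

def matchingLabelling (t : Fin 3 → ℕ) : Fin 6 → ℕ :=
  ![t 0, t 1, t 0, t 1, t 2, t 2]

lemma matchingLabelling_injective : Function.Injective matchingLabelling := by
  intro t u h
  funext i
  fin_cases i
  exacts [congrFun h 0, congrFun h 1, congrFun h 4]

lemma isMagic_iff_opposite_eq (s : ℕ) (x : Fin 6 → ℕ) :
    (x 0 + x 3 + x 4 = s ∧ x 0 + x 1 + x 5 = s ∧
        x 1 + x 2 + x 4 = s ∧ x 2 + x 3 + x 5 = s) ↔
      x 2 = x 0 ∧ x 3 = x 1 ∧ x 5 = x 4 ∧ x 0 + x 1 + x 4 = s := by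
  omega

lemma magicLabellings_eq_range (s : ℕ) :
    {x : Fin 6 → ℕ |
        x 0 + x 3 + x 4 = s ∧ x 0 + x 1 + x 5 = s ∧
        x 1 + x 2 + x 4 = s ∧ x 2 + x 3 + x 5 = s} =
      Set.range (matchingLabelling ∘ Subtype.val (p := fun t : Fin 3 → ℕ ↦ ∑ i, t i = s)) := by
  ext x
  simp only [Set.mem_ofPred_eq, isMagic_iff_opposite_eq, Set.mem_range, Subtype.exists,
    Fin.sum_univ_three]
  constructor
  · rintro ⟨h2, h3, h5, hs⟩
    refine ⟨![x 0, x 1, x 4], hs, ?_⟩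
    funext i
    fin_cases i <;> simp [matchingLabelling, h2, h3, h5]
  · rintro ⟨t, hs, rfl⟩
    simpa [matchingLabelling] using hs

lemma Nat.card_sum_eq_choose (α : Type*) [Fintype α] (s : ℕ) :
    Nat.card {t : α → ℕ // ∑ i, t i = s} = (Fintype.card α + s - 1).choose s := by
  classical
  rw [← Nat.card_congr (Sym.equivNatSumOfFintype α s), Nat.card_eq_fintype_card,
    Sym.card_sym_eq_choose]

/-- The number of magic labellings of K4 with magic sum `s` equals
`C(s+2,2) = (s+1)(s+2)/2`. -/
theorem stmt_2 (s : ℕ) :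
    Set.ncard {x : Fin 6 → ℕ |
        x 0 + x 3 + x 4 = s ∧ x 0 + x 1 + x 5 = s ∧
        x 1 + x 2 + x 4 = s ∧ x 2 + x 3 + x 5 = s} = (s + 2).choose 2 ∧
    (s + 2).choose 2 = (s + 1) * (s + 2) / 2 := by
  refine ⟨?_, ?_⟩
  · rw [magicLabellings_eq_range,
      Set.ncard_range_of_injective (matchingLabelling_injective.comp Subtype.val_injective),
      Nat.card_sum_eq_choose, Fintype.card_fin, show 3 + s - 1 = s + 2 by omega]
    exact Nat.choose_symm_add
  · rw [Nat.choose_two_right, Nat.mul_comm]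
    rfl
end

section
/- The real solution space S_ℝ(G2) = {(x1,...,x9,s) ∈ ℝ^10 : x4+x6+x8=s, x1+x2+x7=s, x4+x5+x9=s, x2+x3+x8=s, x5+x6+x7=s, x1+x3+x9=s} has dimension 4, and the four vectors β1 = e1+e5+e8, β2 = e2+e6+e9, β3 = e3+e4+e7, β4 = e7+e8+e9 (each with magic sum 1) are linearly independent and their x-parts span the projection of this space to the x-coordinates; in particular every magic ℝ-labelling of G2 is a unique real linear combination of β1, β2, β3, β4. -/
/-- Magic ℝ-labelling of the graph G2 with magic sum `s`. -/
def MagicG2R (x : Fin 9 → ℝ) (s : ℝ) : Prop :=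
  x 3 + x 5 + x 7 = s ∧ x 0 + x 1 + x 6 = s ∧ x 3 + x 4 + x 8 = s ∧
  x 1 + x 2 + x 7 = s ∧ x 4 + x 5 + x 6 = s ∧ x 0 + x 2 + x 8 = s

def beta1R : Fin 9 → ℝ := ![1, 0, 0, 0, 1, 0, 0, 1, 0]
def beta2R : Fin 9 → ℝ := ![0, 1, 0, 0, 0, 1, 0, 0, 1]
def beta3R : Fin 9 → ℝ := ![0, 0, 1, 1, 0, 0, 1, 0, 0]
def beta4R : Fin 9 → ℝ := ![0, 0, 0, 0, 0, 0, 1, 1, 1]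

/-! A magic labelling `x` is determined by `x₁, x₂, x₃, x₇` (`x 0, x 1, x 2, x 6` in Lean).
The four `βᵢ` are magic with sum `1`, and `∑ kᵢ βᵢ` has coordinates `1, 2, 3, 7` equal to
`k₁, k₂, k₃, k₃ + k₄`; so `x` is the combination with coefficients `x₁, x₂, x₃, x₇ - x₃`, and the
same coordinates show that the `βᵢ` are independent. Hence the solution space is spanned by the
four independent vectors `(βᵢ, 1)`. -/

namespace MagicG2R

variable {x y : Fin 9 → ℝ} {s t : ℝ}

theorem zero : MagicG2R 0 0 := by
  norm_num [MagicG2R]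

theorem add (hx : MagicG2R x s) (hy : MagicG2R y t) : MagicG2R (x + y) (s + t) := by
  obtain ⟨hx₁, hx₂, hx₃, hx₄, hx₅, hx₆⟩ := hx
  obtain ⟨hy₁, hy₂, hy₃, hy₄, hy₅, hy₆⟩ := hy
  simp only [MagicG2R, Pi.add_apply]
  refine ⟨?_, ?_, ?_, ?_, ?_, ?_⟩ <;> linarith

theorem smul (c : ℝ) (hx : MagicG2R x s) : MagicG2R (c • x) (c * s) := by
  obtain ⟨h₁, h₂, h₃, h₄, h₅, h₆⟩ := hx
  simp only [MagicG2R, Pi.smul_apply, smul_eq_mul, ← mul_add, h₁, h₂, h₃, h₄, h₅, h₆, and_self]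

end MagicG2R

def betaR : Fin 4 → Fin 9 → ℝ := ![beta1R, beta2R, beta3R, beta4R]

theorem sum_smul_betaR_eq_add (k : Fin 4 → ℝ) :
    ∑ i, k i • betaR i = k 0 • beta1R + k 1 • beta2R + k 2 • beta3R + k 3 • beta4R :=
  Fin.sum_univ_four _

theorem sum_smul_betaR (k : Fin 4 → ℝ) :
    ∑ i, k i • betaR i = ![k 0, k 1, k 2, k 2, k 0, k 1, k 2 + k 3, k 0 + k 3, k 1 + k 3] := by
  ext j
  fin_cases j <;> simp [betaR, beta1R, beta2R, beta3R, beta4R, Fin.sum_univ_four]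

theorem magicG2R_betaR (i : Fin 4) : MagicG2R (betaR i) 1 := by
  fin_cases i <;> simp [MagicG2R, betaR, beta1R, beta2R, beta3R, beta4R]

theorem linearIndependent_betaR : LinearIndependent ℝ betaR := by
  refine Fintype.linearIndependent_iff.2 fun k hk => ?_
  rw [sum_smul_betaR] at hk
  have h₂ : k 2 = 0 := congrFun hk 2
  have h₆ : k 2 + k 3 = 0 := congrFun hk 6
  intro i
  fin_cases i
  exacts [congrFun hk 0, congrFun hk 1, h₂, show k 3 = 0 by linarith]

def magicCoeffs (x : Fin 9 → ℝ) : Fin 4 → ℝ := ![x 0, x 1, x 2, x 6 - x 2]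

namespace MagicG2R

variable {x : Fin 9 → ℝ} {s : ℝ}

theorem sum_magicCoeffs_smul_betaR (h : MagicG2R x s) : ∑ i, magicCoeffs x i • betaR i = x := by
  obtain ⟨h₁, h₂, h₃, h₄, h₅, h₆⟩ := h
  rw [sum_smul_betaR]
  ext j
  fin_cases j <;>
    simp only [magicCoeffs, Matrix.cons_val_zero, Matrix.cons_val_one, Matrix.cons_val,
      add_sub_cancel, Fin.isValue, Fin.zero_eta, Fin.mk_one, Fin.reduceFinMk] <;> linarith

theorem eq_sum_magicCoeffs (h : MagicG2R x s) : s = ∑ i, magicCoeffs x i := by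
  simp only [magicCoeffs, Fin.sum_univ_four, Matrix.cons_val_zero, Matrix.cons_val_one,
    Matrix.cons_val, add_add_sub_cancel]
  exact h.2.1.symm

end MagicG2R

def magicSubmodule : Submodule ℝ (Fin 10 → ℝ) where
  carrier := {v | MagicG2R (Fin.init v) (v (Fin.last 9))}
  add_mem' hv hw := hv.add hw
  zero_mem' := MagicG2R.zero
  smul_mem' c _ hv := hv.smul c

def betaWithSum (i : Fin 4) : Fin 10 → ℝ := Fin.snoc (betaR i) 1

theorem betaWithSum_mem (i : Fin 4) : betaWithSum i ∈ magicSubmodule := by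
  show MagicG2R (Fin.init (betaWithSum i)) (betaWithSum i (Fin.last 9))
  rw [betaWithSum, Fin.init_snoc, Fin.snoc_last]
  exact magicG2R_betaR i

theorem sum_smul_betaWithSum (k : Fin 4 → ℝ) :
    ∑ i, k i • betaWithSum i = Fin.snoc (α := fun _ => ℝ) (∑ i, k i • betaR i) (∑ i, k i) := by
  ext j
  refine Fin.lastCases ?_ (fun j => ?_) j <;>
    simp only [betaWithSum, Finset.sum_apply, Pi.smul_apply, Fin.snoc_last, Fin.snoc_castSucc,
      smul_eq_mul, mul_one]

theorem linearIndependent_betaWithSum : LinearIndependent ℝ betaWithSum :=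
  .of_comp (LinearMap.funLeft ℝ ℝ Fin.castSucc) <| by
    convert linearIndependent_betaR
    exact funext fun i => Fin.init_snoc (α := fun _ => ℝ) _ _

theorem magicSubmodule_eq_span : magicSubmodule = Submodule.span ℝ (Set.range betaWithSum) := by
  refine le_antisymm (fun v hv => ?_) <|
    Submodule.span_le.2 <| Set.range_subset_iff.2 betaWithSum_mem
  have hv : MagicG2R (Fin.init v) (v (Fin.last 9)) := hv
  refine (Submodule.mem_span_range_iff_exists_fun ℝ).2 ⟨magicCoeffs (Fin.init v), ?_⟩
  rw [sum_smul_betaWithSum, hv.sum_magicCoeffs_smul_betaR, ← hv.eq_sum_magicCoeffs,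
    Fin.snoc_init_self]

theorem finrank_magicSubmodule : Module.finrank ℝ magicSubmodule = 4 := by
  rw [magicSubmodule_eq_span, finrank_span_eq_card linearIndependent_betaWithSum, Fintype.card_fin]

theorem stmt_3 :
    (∃ S : Submodule ℝ (Fin 10 → ℝ),
      (S : Set (Fin 10 → ℝ)) =
        {v | MagicG2R (fun i : Fin 9 => v i.castSucc) (v 9)} ∧
      Module.finrank ℝ S = 4) ∧
    LinearIndependent ℝ ![beta1R, beta2R, beta3R, beta4R] ∧
    (∀ x : Fin 9 → ℝ, (∃ s, MagicG2R x s) →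
      ∃! k : Fin 4 → ℝ,
        x = k 0 • beta1R + k 1 • beta2R + k 2 • beta3R + k 3 • beta4R) := by
  refine ⟨⟨magicSubmodule, rfl, finrank_magicSubmodule⟩, linearIndependent_betaR, ?_⟩
  rintro x ⟨s, hs⟩
  simp_rw [← sum_smul_betaR_eq_add]
  refine ⟨magicCoeffs x, hs.sum_magicCoeffs_smul_betaR.symm, fun k hk => ?_⟩
  refine linearIndependent_betaR.fintypeLinearCombination_injective ?_
  simp only [Fintype.linearCombination_apply, ← hk, hs.sum_magicCoeffs_smul_betaR]
end
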